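/- Hermite integral formula for rational interpolation: let f be analytic on a simply connected domain Ω ⊂ ℂ bounded by a closed curve Γ, let α_0,…,α_N ∈ Ω and β_1,…,β_N ∈ ℂ, and let r be the unique type-(N,N) rational function with simple poles at the β_j interpolating f at the α_j. Then for any z ∈ Ω, f(z) − r(z) = (1/(2πi)) ∮_Γ (φ(z)/φ(t)) · f(t)/(t−z) dt, where φ(z) = Π_{j=0}^N (z−α_j) / Π_{j=1}^N (z−β_j). -/
import Mathlib
open Finset

lemma prodEraseNone {κ : Type*} [Fintype κ] [DecidableEq κ] (f : Option κ → ℂ) :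
    ∏ x ∈ (univ : Finset (Option κ)).erase none, f x = ∏ j : κ, f (some j) := by
  rw [show (univ : Finset (Option κ)).erase none = univ.map Function.Embedding.some from by
    ext o; cases o <;> simp, Finset.prod_map]
  rfl

lemma prodEraseSome {κ : Type*} [Fintype κ] [DecidableEq κ] (f : Option κ → ℂ) (j : κ) :
    ∏ x ∈ (univ : Finset (Option κ)).erase (some j), f x
      = f none * ∏ k ∈ univ.erase j, f (some k) := by
  rw [show (univ : Finset (Option κ)).erase (some j) = Finset.insertNone (univ.erase j) from by
    ext o; cases o <;> simp, Finset.prod_insertNone]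

private lemma aux0 (x a b : ℂ) (ha : a ≠ 0) (hb : b ≠ 0) (hx : x ≠ 0) :
    x⁻¹ * a⁻¹ * (b⁻¹ * a) = x⁻¹ * b⁻¹ := by
  field_simp

private lemma aux1 (a b c f e : ℂ) (ha : a ≠ 0) (hb : b ≠ 0) (hc : c ≠ 0) (hf : f ≠ 0)
    (he : e ≠ 0) : a⁻¹ * (b * e)⁻¹ * (c⁻¹ * a * (f⁻¹ * e)) = c⁻¹ * f⁻¹ * b⁻¹ := by
  field_simp

lemma pf {n : ℕ} (α : Fin n → ℂ) (hα : Function.Injective α) (z t : ℂ)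
    (hz : ∀ j, z ≠ α j) (htz : t ≠ z) (htα : ∀ j, t ≠ α j) :
    (t - z)⁻¹ * (∏ j, (t - α j))⁻¹ =
      (t - z)⁻¹ * (∏ j, (z - α j))⁻¹ +
      ∑ j, ((α j - z)⁻¹ * (∏ k ∈ univ.erase j, (α j - α k))⁻¹) * (t - α j)⁻¹ := by
  classical
  set v : Option (Fin n) → ℂ := fun o => o.elim z α with hv
  have hvinj : Function.Injective v := by
    intro a b hab
    cases a <;> cases b <;> simp only [hv, Option.elim] at hab
    · rfl
    · exact absurd hab (hz _)
    · exact absurd hab.symm (hz _)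
    · exact congrArg some (hα hab)
  have hb := Lagrange.sum_basis (s := (univ : Finset (Option (Fin n)))) (v := v)
    hvinj.injOn ⟨none, mem_univ _⟩
  have hb2 := congrArg (Polynomial.eval t) hb
  rw [Polynomial.eval_finset_sum, Polynomial.eval_one] at hb2
  have hbasis : ∀ i, Polynomial.eval t (Lagrange.basis univ v i)
      = ∏ k ∈ univ.erase i, ((v i - v k)⁻¹ * (t - v k)) := by
    intro i
    rw [Lagrange.basis, Polynomial.eval_prod]
    exact Finset.prod_congr rfl fun k _ => by
      simp [Lagrange.basisDivisor]
  simp only [hbasis] at hb2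
  rw [Fintype.sum_option] at hb2
  rw [prodEraseNone] at hb2
  simp only [prodEraseSome] at hb2
  simp only [hv, Option.elim] at hb2
  have hTz : t - z ≠ 0 := sub_ne_zero.mpr htz
  have hTα : ∀ k, t - α k ≠ 0 := fun k => sub_ne_zero.mpr (htα k)
  have hprodT : (∏ j, (t - α j)) ≠ 0 := Finset.prod_ne_zero_iff.mpr fun k _ => hTα k
  have hZα : ∀ k, z - α k ≠ 0 := fun k => sub_ne_zero.mpr (hz k)
  calc (t - z)⁻¹ * (∏ j, (t - α j))⁻¹
      = ((t - z)⁻¹ * (∏ j, (t - α j))⁻¹) *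
        ((∏ k : Fin n, ((z - α k)⁻¹ * (t - α k))) +
          ∑ j, ((α j - z)⁻¹ * (t - z)) * ∏ k ∈ univ.erase j, ((α j - α k)⁻¹ * (t - α k))) := by
        rw [hb2, mul_one]
    _ = _ := by
        rw [mul_add, Finset.mul_sum]
        congr 1
        · rw [Finset.prod_mul_distrib, Finset.prod_inv_distrib]
          exact aux0 _ _ _ hprodT (Finset.prod_ne_zero_iff.mpr fun k _ => hZα k) hTz
        · refine Finset.sum_congr rfl fun j _ => ?_
          have hErT : (∏ k ∈ univ.erase j, (t - α k)) ≠ 0 :=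
            Finset.prod_ne_zero_iff.mpr fun k _ => hTα k
          have hAz : α j - z ≠ 0 := sub_ne_zero.mpr fun h => hz j h.symm
          have hErA : (∏ k ∈ univ.erase j, (α j - α k)) ≠ 0 :=
            Finset.prod_ne_zero_iff.mpr fun k hk =>
              sub_ne_zero.mpr fun h => (mem_erase.mp hk).1 (hα h).symm
          rw [← Finset.mul_prod_erase univ _ (mem_univ j), Finset.prod_mul_distrib,
            Finset.prod_inv_distrib]
          exact aux1 _ _ _ _ _ hTz (hTα j) hAz hErA hErT

lemma CircleIntegrable.constMul {g : ℂ → ℂ} {c : ℂ} {R : ℝ}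
    (hg : CircleIntegrable g c R) (a : ℂ) : CircleIntegrable (fun t => a * g t) c R :=
  hg.const_mul a

lemma circleIntegral_add' {f g : ℂ → ℂ} {c : ℂ} {R : ℝ}
    (hf : CircleIntegrable f c R) (hg : CircleIntegrable g c R) :
    (∮ t in C(c, R), (f t + g t)) = (∮ t in C(c, R), f t) + ∮ t in C(c, R), g t := by
  simp only [circleIntegral, smul_add]
  exact intervalIntegral.integral_add hf.out hg.out

lemma circleIntegral_finset_sum {ι : Type*} (s : Finset ι) (F : ι → ℂ → ℂ) {c : ℂ} {R : ℝ}
    (h : ∀ i ∈ s, CircleIntegrable (F i) c R) :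
    (∮ t in C(c, R), ∑ i ∈ s, F i t) = ∑ i ∈ s, ∮ t in C(c, R), F i t := by
  simp only [circleIntegral, Finset.smul_sum]
  exact intervalIntegral.integral_finset_sum fun i hi => (h i hi).out

/-- Hermite integral formula for rational interpolation. -/
theorem hermite_integral_formula (N : ℕ) (c : ℂ) (Rr : ℝ) (hR : 0 < Rr)
    (f : ℂ → ℂ) (hf : DifferentiableOn ℂ f (Metric.closedBall c Rr))
    (α : Fin (N+1) → ℂ) (hα : Function.Injective α)
    (hαin : ∀ j, α j ∈ Metric.ball c Rr)
    (β : Fin N → ℂ) (hβ : Function.Injective β)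
    (hβΓ : ∀ j, β j ∉ Metric.sphere c Rr) (hβα : ∀ i j, β i ≠ α j)
    (P : Polynomial ℂ) (hP : P.degree ≤ N)
    (r : ℂ → ℂ) (hr : ∀ z, r z = P.eval z / ∏ j, (z - β j))
    (hinterp : ∀ j, r (α j) = f (α j))
    (z : ℂ) (hz : z ∈ Metric.ball c Rr) (hzβ : ∀ j, z ≠ β j) :
    f z - r z = (1 / (2 * Real.pi * Complex.I)) *
      ∮ t in C(c, Rr),
        (((∏ j, (z - α j)) / (∏ j, (z - β j))) /
          ((∏ j, (t - α j)) / (∏ j, (t - β j)))) * (f t / (t - z)) := by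
  classical
  by_cases hcase : ∃ j, z = α j
  · obtain ⟨j0, hj0⟩ := hcase
    have h0 : (∏ j, (z - α j)) = 0 :=
      Finset.prod_eq_zero (mem_univ j0) (by rw [hj0, sub_self])
    have hI : (∮ t in C(c, Rr),
        (((∏ j, (z - α j)) / (∏ j, (z - β j))) /
          ((∏ j, (t - α j)) / (∏ j, (t - β j)))) * (f t / (t - z))) = 0 := by
      have hz0 : ∀ t : ℂ, (((∏ j, (z - α j)) / (∏ j, (z - β j))) /
          ((∏ j, (t - α j)) / (∏ j, (t - β j)))) * (f t / (t - z)) = 0 := by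
        intro t; rw [h0]; simp
      simp only [hz0]
      simp [circleIntegral]
    rw [hI, mul_zero, hj0, hinterp j0, sub_self]
  · push_neg at hcase
    set h : ℂ → ℂ := fun t => f t * ∏ j, (t - β j) with hh
    have hβdiff : Differentiable ℂ (fun t : ℂ => ∏ j, (t - β j)) := by
      have := (∏ j, (Polynomial.X - Polynomial.C (β j))).differentiable
      simpa [Polynomial.eval_prod] using this
    have hhd : DiffContOnCl ℂ h (Metric.ball c Rr) := by
      refine ⟨(hf.mono Metric.ball_subset_closedBall).mul hβdiff.differentiableOn, ?_⟩
      rw [closure_ball c (ne_of_gt hR)]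
      exact hf.continuousOn.mul hβdiff.continuous.continuousOn
    have cauchy : ∀ w ∈ Metric.ball c Rr,
        (∮ t in C(c, Rr), (t - w)⁻¹ * h t) = (2 * ↑Real.pi * Complex.I) * h w := by
      intro w hw
      simpa [smul_eq_mul] using hhd.circleIntegral_sub_inv_smul hw
    have hcont : ContinuousOn h (Metric.sphere c Rr) :=
      (hf.continuousOn.mono Metric.sphere_subset_closedBall).mul
        hβdiff.continuous.continuousOn
    have hsne : ∀ w ∈ Metric.ball c Rr, ∀ t ∈ Metric.sphere c Rr, t - w ≠ 0 := by
      intro w hw t ht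
      refine sub_ne_zero.mpr fun hwt => ?_
      rw [← hwt] at hw
      rw [Metric.mem_ball, Metric.mem_sphere.mp ht] at hw
      exact lt_irrefl _ hw
    have hint : ∀ w ∈ Metric.ball c Rr,
        CircleIntegrable (fun t => (t - w)⁻¹ * h t) c Rr := fun w hw =>
      ContinuousOn.circleIntegrable hR.le
        (((((continuous_id.sub continuous_const).continuousOn).inv₀
          (fun t ht => hsne w hw t ht))).mul hcont)
    have hPzβ : (∏ j, (z - β j)) ≠ 0 :=
      Finset.prod_ne_zero_iff.mpr fun j _ => sub_ne_zero.mpr (hzβ j)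
    have hPzα : (∏ j, (z - α j)) ≠ 0 :=
      Finset.prod_ne_zero_iff.mpr fun j _ => sub_ne_zero.mpr (hcase j)
    set φz : ℂ := (∏ j, (z - α j)) / (∏ j, (z - β j)) with hφz
    set Cz : ℂ := (∏ j, (z - β j))⁻¹ with hCz
    set CC : Fin (N+1) → ℂ := fun j =>
      φz * ((α j - z)⁻¹ * (∏ k ∈ univ.erase j, (α j - α k))⁻¹) with hCC
    clear_value φz Cz CC
    have keyEq : Set.EqOn
        (fun t => (φz / ((∏ j, (t - α j)) / (∏ j, (t - β j)))) * (f t / (t - z)))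
        (fun t => Cz * ((t - z)⁻¹ * h t) + ∑ j, CC j * ((t - α j)⁻¹ * h t))
        (Metric.sphere c Rr) := by
      intro t ht
      have htz : t ≠ z := sub_ne_zero.mp (hsne z hz t ht)
      have htα : ∀ j, t ≠ α j := fun j => sub_ne_zero.mp (hsne (α j) (hαin j) t ht)
      have htβ : ∀ j, t - β j ≠ 0 := fun j => sub_ne_zero.mpr (fun e => hβΓ j (e ▸ ht))
      have hPtα : (∏ j, (t - α j)) ≠ 0 :=
        Finset.prod_ne_zero_iff.mpr fun j _ => sub_ne_zero.mpr (htα j)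
      have hPtβ : (∏ j, (t - β j)) ≠ 0 := Finset.prod_ne_zero_iff.mpr fun j _ => htβ j
      have hTz : t - z ≠ 0 := sub_ne_zero.mpr htz
      have hpf := pf α hα z t hcase htz htα
      show (φz / ((∏ j, (t - α j)) / (∏ j, (t - β j)))) * (f t / (t - z))
        = Cz * ((t - z)⁻¹ * h t) + ∑ j, CC j * ((t - α j)⁻¹ * h t)
      have lhs_eq : (φz / ((∏ j, (t - α j)) / (∏ j, (t - β j)))) * (f t / (t - z))
          = (φz * h t) * ((t - z)⁻¹ * (∏ j, (t - α j))⁻¹) := by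
        simp only [hh]
        field_simp
      rw [lhs_eq, hpf, mul_add, Finset.mul_sum]
      congr 1
      · simp only [hCz, hφz]
        field_simp
      · exact Finset.sum_congr rfl fun j _ => by simp only [hCC]; ring
    have splitInt : (∮ t in C(c, Rr),
          (Cz * ((t - z)⁻¹ * h t) + ∑ j, CC j * ((t - α j)⁻¹ * h t)))
        = Cz * ((2 * ↑Real.pi * Complex.I) * h z)
          + ∑ j, CC j * ((2 * ↑Real.pi * Complex.I) * h (α j)) := by
      have hsumInt : CircleIntegrable (fun t => ∑ j, CC j * ((t - α j)⁻¹ * h t)) c Rr := by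
        apply ContinuousOn.circleIntegrable hR.le
        apply continuousOn_finset_sum
        intro j _
        exact continuousOn_const.mul
          ((((continuous_id.sub continuous_const).continuousOn).inv₀
            (fun t ht => hsne (α j) (hαin j) t ht)).mul hcont)
      rw [circleIntegral_add' ((hint z hz).constMul Cz) hsumInt,
        circleIntegral_finset_sum _ _ (fun j _ => (hint (α j) (hαin j)).constMul (CC j))]
      congr 1
      · rw [show (∮ t in C(c, Rr), Cz * ((t - z)⁻¹ * h t))
            = Cz * ∮ t in C(c, Rr), (t - z)⁻¹ * h t by
          simpa [smul_eq_mul] using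
            circleIntegral.integral_smul Cz (fun t => (t - z)⁻¹ * h t) c Rr,
          cauchy z hz]
      · refine Finset.sum_congr rfl fun j _ => ?_
        rw [show (∮ t in C(c, Rr), CC j * ((t - α j)⁻¹ * h t))
            = CC j * ∮ t in C(c, Rr), (t - α j)⁻¹ * h t by
          simpa [smul_eq_mul] using
            circleIntegral.integral_smul (CC j) (fun t => (t - α j)⁻¹ * h t) c Rr,
          cauchy (α j) (hαin j)]
    have hzval : Cz * h z = f z := by
      simp only [hCz, hh]
      field_simp
    have hαval : ∀ j, h (α j) = P.eval (α j) := by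
      intro j
      have h2 : (∏ k, (α j - β k)) ≠ 0 :=
        Finset.prod_ne_zero_iff.mpr fun k _ => sub_ne_zero.mpr fun e => hβα k j e.symm
      have := hinterp j
      rw [hr (α j)] at this
      simp only [hh]
      rw [← this, div_mul_cancel₀ _ h2]
    have hlag : P.eval z
        = ∑ j, P.eval (α j) * ∏ k ∈ univ.erase j, ((α j - α k)⁻¹ * (z - α k)) := by
      have hdeg : P.degree < (#(univ : Finset (Fin (N+1))) : ℕ) := by
        rw [card_univ, Fintype.card_fin]
        exact lt_of_le_of_lt hP (by exact_mod_cast lt_add_one N)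
      have hP2 := Lagrange.eq_interpolate (v := α) hα.injOn hdeg
      have := congrArg (Polynomial.eval z) hP2
      rw [Lagrange.interpolate_apply, Polynomial.eval_finset_sum] at this
      rw [this]
      refine Finset.sum_congr rfl fun j _ => ?_
      rw [Polynomial.eval_mul, Polynomial.eval_C, Lagrange.basis, Polynomial.eval_prod]
      congr 1
      exact Finset.prod_congr rfl fun k _ => by simp [Lagrange.basisDivisor]
    have hsum : ∑ j, CC j * h (α j) = - r z := by
      have hterm : ∀ j, CC j * P.eval (α j)
          = -(∏ k, (z - β k))⁻¹ *
            (P.eval (α j) * ∏ k ∈ univ.erase j, ((α j - α k)⁻¹ * (z - α k))) := by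
        intro j
        have hsplit : (∏ k, (z - α k)) = (z - α j) * ∏ k ∈ univ.erase j, (z - α k) :=
          (Finset.mul_prod_erase univ _ (mem_univ j)).symm
        have hAz : α j - z ≠ 0 := sub_ne_zero.mpr fun e => hcase j e.symm
        have hZAj : z - α j ≠ 0 := sub_ne_zero.mpr (hcase j)
        have hErZ : (∏ k ∈ univ.erase j, (z - α k)) ≠ 0 :=
          Finset.prod_ne_zero_iff.mpr fun k _ => sub_ne_zero.mpr (hcase k)
        have hErA : (∏ k ∈ univ.erase j, (α j - α k)) ≠ 0 :=
          Finset.prod_ne_zero_iff.mpr fun k hk =>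
            sub_ne_zero.mpr fun e => (mem_erase.mp hk).1 (hα e).symm
        simp only [hCC, hφz]
        rw [hsplit, Finset.prod_mul_distrib, Finset.prod_inv_distrib]
        field_simp
        ring
      simp only [hαval]
      rw [Finset.sum_congr rfl fun j _ => hterm j, ← Finset.mul_sum, ← hlag, hr z,
        neg_mul, inv_mul_eq_div]
    rw [circleIntegral.integral_congr hR.le keyEq, splitInt]
    have h2pi : (2 * ↑Real.pi * Complex.I : ℂ) ≠ 0 := by
      simp [Real.pi_ne_zero, Complex.I_ne_zero]
    rw [show Cz * (2 * ↑Real.pi * Complex.I * h z)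
          + ∑ j, CC j * (2 * ↑Real.pi * Complex.I * h (α j))
        = (2 * ↑Real.pi * Complex.I) * (Cz * h z + ∑ j, CC j * h (α j)) by
      rw [mul_add, Finset.mul_sum]
      exact congrArg₂ (· + ·) (by ring) (Finset.sum_congr rfl fun j _ => by ring),
      hzval, hsum]
    field_simp
    ring
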